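/- arXiv:1211.6640 — 3 statements merged into one kernel-verified Lean document; each statement's English description precedes it below -/
import Mathlib

section
/- Let λ ∈ ℂ with λ ≠ 1, let n ∈ ℤ_{≥0}, and let p(x) be a complex polynomial of degree at most n written as p(x) = Σ_{k=0}^{n} b_k H_k(x|λ). Then for every 0 ≤ k ≤ n, b_k = (1/((1−λ)·k!))·(p^{(k)}(1) − λ·p^{(k)}(0)), where p^{(k)} denotes the k-th derivative of p. -/
/-!
Substituting `x ↦ x + 1` in the generating function multiplies `e^{xt}` by `e^t`; cancelling
`e^t - λ` then gives the functional equation `H_m(x + 1) - λ H_m(x) = (1 - λ) x^m`.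
Since `q^{(k)}(a) / k!` is the `k`-th Taylor coefficient of `q` at `a`, the quantity
`(q^{(k)}(1) - λ q^{(k)}(0)) / k!` is the `k`-th coefficient of `q(x + 1) - λ q(x)`, which the
functional equation turns into `(1 - λ) ∑ b_m x^m` for `q = ∑ b_m H_m`.
-/

open Polynomial

open scoped Nat

theorem PowerSeries.exp_sub_C_ne_zero {A : Type*} [CommRing A] [Algebra ℚ A] [Nontrivial A]
    (a : A) : exp A - C a ≠ 0 := fun h => by
  simpa [coeff_exp, coeff_C] using congrArg (coeff 1) h

namespace Polynomial

section Field

variable {K : Type*} [Field K]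

noncomputable def egf (H : ℕ → K[X]) : PowerSeries K[X] :=
  PowerSeries.mk fun n => C (n ! : K)⁻¹ * H n

theorem coeff_egf (H : ℕ → K[X]) (n : ℕ) :
    PowerSeries.coeff n (egf H) = C (n ! : K)⁻¹ * H n :=
  PowerSeries.coeff_mk _ _

theorem map_taylor_egf (r : K) (H : ℕ → K[X]) :
    PowerSeries.map (taylorAlgHom r : K[X] →+* K[X]) (egf H) = egf fun n => taylor r (H n) := by
  ext n
  simp [coeff_egf]

variable [CharZero K]

theorem rescale_X_exp_eq_egf :
    PowerSeries.rescale X (PowerSeries.exp K[X]) = egf fun n => X ^ n := by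
  ext n
  rw [coeff_egf, PowerSeries.coeff_rescale, PowerSeries.coeff_exp, Polynomial.algebraMap_apply,
    mul_comm]
  simp

theorem map_taylor_rescale_X_exp (r : K) :
    PowerSeries.map (taylorAlgHom r : K[X] →+* K[X])
        (PowerSeries.rescale X (PowerSeries.exp K[X])) =
      PowerSeries.rescale (C r) (PowerSeries.exp K[X]) *
        PowerSeries.rescale X (PowerSeries.exp K[X]) := by
  rw [← PowerSeries.rescale_map, PowerSeries.map_exp, PowerSeries.exp_mul_exp_eq_exp_add,
    add_comm]
  simp

theorem taylor_one_sub_C_mul_eq_of_egf {lam : K} {H : ℕ → K[X]}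
    (hH : (PowerSeries.exp K[X] - PowerSeries.C (C lam)) * egf H =
      PowerSeries.C (C (1 - lam)) * PowerSeries.rescale X (PowerSeries.exp K[X])) (m : ℕ) :
    taylor 1 (H m) - C lam * H m = C (1 - lam) * X ^ m := by
  have hmap := congrArg (PowerSeries.map (taylorAlgHom (1 : K) : K[X] →+* K[X])) hH
  rw [map_mul, map_mul, map_sub, PowerSeries.map_exp, PowerSeries.map_C, PowerSeries.map_C,
    map_taylor_egf, map_taylor_rescale_X_exp] at hmap
  simp only [RingHom.coe_coe, taylorAlgHom_apply, taylor_C, C_1, PowerSeries.rescale_one,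
    RingHom.id_apply] at hmap
  have hegf : egf (fun n => taylor 1 (H n)) - PowerSeries.C (C lam) * egf H =
      PowerSeries.C (C (1 - lam)) * egf fun n => X ^ n := by
    apply mul_left_cancel₀ (PowerSeries.exp_sub_C_ne_zero (C lam))
    rw [← rescale_X_exp_eq_egf]
    linear_combination hmap - PowerSeries.C (C lam) * hH
  have hm := congrArg (PowerSeries.coeff m) hegf
  rw [map_sub, PowerSeries.coeff_C_mul, PowerSeries.coeff_C_mul, coeff_egf, coeff_egf,
    coeff_egf] at hm
  apply mul_left_cancel₀ (C_ne_zero.mpr (inv_ne_zero (Nat.cast_ne_zero.mpr m.factorial_ne_zero)))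
  linear_combination hm

end Field

theorem eval_iterate_derivative {R : Type*} [CommSemiring R] (q : R[X]) (r : R) (k : ℕ) :
    (derivative^[k] q).eval r = k ! * (taylor r q).coeff k := by
  rw [taylor_coeff, ← factorial_smul_hasseDeriv, LinearMap.smul_apply, eval_smul, nsmul_eq_mul]

end Polynomial

theorem frobenius_euler_coefficients_general
    (lam : ℂ) (hlam : lam ≠ 1) (H : ℕ → Polynomial ℂ)
    (hH : (PowerSeries.exp (Polynomial ℂ) - PowerSeries.C (Polynomial.C lam)) *
        PowerSeries.mk (fun n => Polynomial.C ((n.factorial : ℂ))⁻¹ * H n) =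
      PowerSeries.C (Polynomial.C (1 - lam)) *
        PowerSeries.rescale Polynomial.X (PowerSeries.exp (Polynomial ℂ)))
    (n : ℕ) (p : Polynomial ℂ) (b : ℕ → ℂ)
    (hb : p = ∑ k ∈ Finset.range (n + 1), Polynomial.C (b k) * H k)
    (k : ℕ) (hk : k ≤ n) :
    b k = (1 / ((1 - lam) * (k.factorial : ℂ))) *
      ((Polynomial.derivative^[k] p).eval 1 - lam * (Polynomial.derivative^[k] p).eval 0) := by
  have hshift : taylor 1 p - C lam * p =
      C (1 - lam) * ∑ m ∈ Finset.range (n + 1), C (b m) * X ^ m := by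
    simp only [hb, map_sum, taylor_mul, taylor_C, Finset.mul_sum, ← Finset.sum_sub_distrib]
    refine Finset.sum_congr rfl fun m _ => ?_
    linear_combination C (b m) * taylor_one_sub_C_mul_eq_of_egf hH m
  have hcoeff : (taylor 1 p).coeff k - lam * p.coeff k = (1 - lam) * b k := by
    simpa only [coeff_sub, coeff_C_mul, finsetSum_coeff, coeff_X_pow, mul_ite, mul_one, mul_zero,
      Finset.sum_ite_eq, Finset.mem_range, Nat.lt_succ_of_le hk, if_true] using
      congrArg (coeff · k) hshift
  have hfac : (k ! : ℂ) ≠ 0 := Nat.cast_ne_zero.mpr k.factorial_ne_zero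
  have hlam' : 1 - lam ≠ 0 := sub_ne_zero.mpr hlam.symm
  rw [eval_iterate_derivative, eval_iterate_derivative, taylor_zero]
  field_simp
  linear_combination -hcoeff

theorem frobenius_euler_coefficients
    (lam : ℂ) (hlam : lam ≠ 1) (H : ℕ → Polynomial ℂ)
    (hH : (PowerSeries.exp (Polynomial ℂ) - PowerSeries.C (Polynomial.C lam)) *
        PowerSeries.mk (fun n => Polynomial.C ((n.factorial : ℂ))⁻¹ * H n) =
      PowerSeries.C (Polynomial.C (1 - lam)) *
        PowerSeries.rescale Polynomial.X (PowerSeries.exp (Polynomial ℂ)))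
    (n : ℕ) (p : Polynomial ℂ) (hp : p.degree ≤ n) (b : ℕ → ℂ)
    (hb : p = ∑ k ∈ Finset.range (n + 1), Polynomial.C (b k) * H k)
    (k : ℕ) (hk : k ≤ n) :
    b k = (1 / ((1 - lam) * (k.factorial : ℂ))) *
      ((Polynomial.derivative^[k] p).eval 1 - lam * (Polynomial.derivative^[k] p).eval 0) :=
  frobenius_euler_coefficients_general lam hlam H hH n p b hb k hk
end

section
/- For every λ ∈ ℂ with λ ≠ 1 and every n ∈ ℤ_{≥0}, Σ_{k=0}^{n} (1/(k!·(n−k)!))·H_k(x|λ)·H_{n−k}(x|λ) = Σ_{k=0}^{n−1} (2^k/k!)·( −λ·Σ_{l=k}^{n} H_{l−k}(λ)·H_{n−l}(λ)/((l−k)!·(n−l)!) + 2λ·H_{n−k}(λ)/(n−k)! )·H_k(x|λ) + (2^n/n!)·H_n(x|λ), as an identity of polynomials in x (for n = 0 the sum over k from 0 to n−1 is empty). -/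
/-! With `F(t) = ∑ Hₙ(x|λ) tⁿ/n!` and `G(t) = F(t)|_{x=0}` we have
`(eᵗ - λ) F(t) = (1 - λ) e^{xt}` and `(eᵗ - λ) G(t) = 1 - λ`. Hence `(eᵗ - λ) (1 - G) = eᵗ - 1`,
so `A := 1 - λ (1 - G)²` satisfies `(eᵗ - λ)² A = (1 - λ) (e^{2t} - λ)`, and
`(eᵗ - λ)² F(t)² = (1 - λ)² e^{2xt} = (1 - λ) (e^{2t} - λ) F(2t) = (eᵗ - λ)² A(t) F(2t)`.
Cancelling `(eᵗ - λ)² ≠ 0` gives `F(t)² = A(t) F(2t)`; the theorem is its coefficient of `tⁿ`,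
where `A(0) = 1` because `G(0) = H₀(λ) = 1`. -/

open PowerSeries

namespace PowerSeries

variable {R : Type*} [CommRing R]

@[simp]
theorem rescale_C (a r : R) : rescale a (C r) = C r := by
  ext (_ | n) <;> simp [coeff_C]

variable [Algebra ℚ R]

theorem exp_sub_C_ne_zero_s10 [Nontrivial R] (lam : R) : exp R - C lam ≠ 0 := fun h => by
  simpa [coeff_C] using congrArg (coeff 1) h

theorem exp_mul_exp_eq_rescale_two : exp R * exp R = rescale 2 (exp R) := by
  simpa [one_add_one_eq_two] using exp_mul_exp_eq_exp_add (1 : R) 1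

end PowerSeries

section FrobeniusEuler

variable {R : Type*} [CommRing R]

noncomputable def frobeniusEulerFactor (lam : R) (g : R⟦X⟧) : R⟦X⟧ :=
  1 - C lam * (1 - g) ^ 2

theorem constantCoeff_frobeniusEulerFactor {lam : R} {g : R⟦X⟧} (hg : constantCoeff g = 1) :
    constantCoeff (frobeniusEulerFactor lam g) = 1 := by
  simp [frobeniusEulerFactor, hg]

theorem coeff_frobeniusEulerFactor {m : ℕ} (hm : m ≠ 0) (lam : R) (g : R⟦X⟧) :
    coeff m (frobeniusEulerFactor lam g) = -lam * coeff m (g * g) + 2 * lam * coeff m g := by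
  simp only [frobeniusEulerFactor, sq, mul_sub, mul_one, sub_mul, one_mul, map_sub, coeff_one, hm,
    if_false, coeff_C, coeff_C_mul, zero_sub, neg_sub, sub_neg_eq_add, neg_mul, two_mul]
  ring

variable [IsDomain R] [Algebra ℚ R]

theorem constantCoeff_eq_one_of_exp_sub_C_mul {lam : R} (hlam : lam ≠ 1) {g : R⟦X⟧}
    (hg : (exp R - C lam) * g = C (1 - lam)) : constantCoeff g = 1 := by
  have h := congrArg constantCoeff hg
  simp only [map_mul, map_sub, constantCoeff_exp, constantCoeff_C] at h
  exact mul_left_cancel₀ (sub_ne_zero.mpr hlam.symm) (h.trans (mul_one _).symm)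

theorem mul_self_eq_frobeniusEulerFactor_mul_rescale_two {lam x : R} {f g : R⟦X⟧}
    (hf : (exp R - C lam) * f = C (1 - lam) * rescale x (exp R))
    (hg : (exp R - C lam) * g = C (1 - lam)) :
    f * f = frobeniusEulerFactor lam g * rescale 2 f := by
  have hf₂ : (rescale 2 (exp R) - C lam) * rescale 2 f =
      C (1 - lam) * rescale (x * 2) (exp R) := by
    simpa [rescale_rescale] using congrArg (rescale 2) hf
  have hexp_x : rescale x (exp R) * rescale x (exp R) = rescale (x * 2) (exp R) := by
    rw [exp_mul_exp_eq_exp_add, mul_two]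
  set D := exp R - C lam
  have hg' : D * (1 - g) = exp R - 1 := by
    rw [mul_sub, hg, map_sub, map_one]; ring
  have hfactor : D ^ 2 * frobeniusEulerFactor lam g =
      C (1 - lam) * (rescale 2 (exp R) - C lam) := by
    calc D ^ 2 * frobeniusEulerFactor lam g = D ^ 2 - C lam * (D * (1 - g)) ^ 2 := by
          rw [frobeniusEulerFactor]; ring
      _ = _ := by rw [hg', ← exp_mul_exp_eq_rescale_two, map_sub, map_one]; ring
  refine mul_left_cancel₀ (pow_ne_zero 2 (exp_sub_C_ne_zero_s10 lam)) ?_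
  calc D ^ 2 * (f * f) = (D * f) * (D * f) := by ring
    _ = C (1 - lam) * (C (1 - lam) * rescale (x * 2) (exp R)) := by
        rw [hf, ← hexp_x]; ring
    _ = D ^ 2 * (frobeniusEulerFactor lam g * rescale 2 f) := by
        rw [← hf₂, ← mul_assoc, ← hfactor]; ring

end FrobeniusEuler

open scoped Polynomial
open Finset

section ExpGeneratingSeries

variable {K : Type*} [Field K]

noncomputable def expGeneratingSeries (H : ℕ → K[X]) : K[X]⟦X⟧ :=
  PowerSeries.mk fun n => Polynomial.C ((n.factorial : K))⁻¹ * H n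

variable (H : ℕ → K[X])

theorem coeff_expGeneratingSeries_mul_self (n : ℕ) :
    coeff n (expGeneratingSeries H * expGeneratingSeries H) =
      ∑ k ∈ range (n + 1),
        Polynomial.C (((k.factorial : K) * ((n - k).factorial : K))⁻¹) * (H k * H (n - k)) := by
  rw [coeff_mul, Nat.sum_antidiagonal_eq_sum_range_succ_mk]
  refine sum_congr rfl fun k _ => ?_
  simp only [expGeneratingSeries, coeff_mk, mul_inv, map_mul]
  ring

theorem coeff_rescale_two_expGeneratingSeries (k : ℕ) :
    coeff k (rescale 2 (expGeneratingSeries H)) =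
      Polynomial.C (2 ^ k / (k.factorial : K)) * H k := by
  simp only [expGeneratingSeries, coeff_rescale, coeff_mk, div_eq_mul_inv, map_mul, map_pow,
    map_ofNat]
  ring

theorem coeff_map_evalZero_expGeneratingSeries (m : ℕ) :
    coeff m ((expGeneratingSeries H).map (Polynomial.C.comp (Polynomial.evalRingHom 0))) =
      Polynomial.C ((H m).eval 0 / (m.factorial : K)) := by
  simp [expGeneratingSeries, div_eq_inv_mul]

theorem coeff_sub_map_evalZero_expGeneratingSeries_mul_self {k n : ℕ} (hkn : k ≤ n) :
    coeff (n - k) ((expGeneratingSeries H).map (Polynomial.C.comp (Polynomial.evalRingHom 0)) *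
        (expGeneratingSeries H).map (Polynomial.C.comp (Polynomial.evalRingHom 0))) =
      Polynomial.C (∑ l ∈ Icc k n, (H (l - k)).eval 0 * (H (n - l)).eval 0 /
        (((l - k).factorial : K) * ((n - l).factorial : K))) := by
  rw [coeff_mul, Nat.sum_antidiagonal_eq_sum_range_succ_mk, ← Ico_add_one_right_eq_Icc,
    sum_Ico_eq_sum_range, show n + 1 - k = n - k + 1 by omega, map_sum]
  refine sum_congr rfl fun j _ => ?_
  rw [coeff_map_evalZero_expGeneratingSeries, coeff_map_evalZero_expGeneratingSeries, ← map_mul,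
    add_tsub_cancel_left, show n - (k + j) = n - k - j by omega, div_mul_div_comm]

end ExpGeneratingSeries

theorem exp_sub_C_mul_map_evalZero {K : Type*} [Field K] [CharZero K] {lam : K} {F : K[X]⟦X⟧}
    (hF : (exp K[X] - C (Polynomial.C lam)) * F =
      C (1 - Polynomial.C lam) * rescale Polynomial.X (exp K[X])) :
    (exp K[X] - C (Polynomial.C lam)) * F.map (Polynomial.C.comp (Polynomial.evalRingHom 0)) =
      C (1 - Polynomial.C lam) := by
  simpa [← rescale_map] using congrArg (map (Polynomial.C.comp (Polynomial.evalRingHom 0))) hF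

open Polynomial PowerSeries Finset

theorem frobenius_euler_weighted_product_sum_identity
    (lam : ℂ) (hlam : lam ≠ 1) (H : ℕ → Polynomial ℂ)
    (hH : (PowerSeries.exp (Polynomial ℂ) - PowerSeries.C (Polynomial.C lam)) *
        PowerSeries.mk (fun n => Polynomial.C ((n.factorial : ℂ))⁻¹ * H n) =
      PowerSeries.C (Polynomial.C (1 - lam)) *
        PowerSeries.rescale Polynomial.X (PowerSeries.exp (Polynomial ℂ)))
    (n : ℕ) :
    (∑ k ∈ Finset.range (n + 1),
        Polynomial.C (((k.factorial : ℂ) * ((n - k).factorial : ℂ))⁻¹) * (H k * H (n - k))) =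
      (∑ k ∈ Finset.range n,
        Polynomial.C ((2 ^ k / (k.factorial : ℂ)) *
          (-lam * ∑ l ∈ Finset.Icc k n,
              (H (l - k)).eval 0 * (H (n - l)).eval 0 /
                (((l - k).factorial : ℂ) * ((n - l).factorial : ℂ)) +
            2 * lam * (H (n - k)).eval 0 / ((n - k).factorial : ℂ))) * H k) +
      Polynomial.C ((2 ^ n : ℂ) / (n.factorial : ℂ)) * H n := by
  rw [show Polynomial.C (1 - lam) = 1 - Polynomial.C lam by rw [map_sub, map_one]] at hH
  change _ * expGeneratingSeries H = _ at hH
  have hG := exp_sub_C_mul_map_evalZero hH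
  have hG₀ := constantCoeff_eq_one_of_exp_sub_C_mul (Polynomial.C_injective.ne hlam) hG
  rw [← coeff_expGeneratingSeries_mul_self,
    mul_self_eq_frobeniusEulerFactor_mul_rescale_two hH hG, mul_comm, PowerSeries.coeff_mul,
    Nat.sum_antidiagonal_eq_sum_range_succ_mk, sum_range_succ, Nat.sub_self,
    coeff_zero_eq_constantCoeff_apply, constantCoeff_frobeniusEulerFactor hG₀, mul_one,
    coeff_rescale_two_expGeneratingSeries]
  refine congrArg (· + _) (sum_congr rfl fun k hk => ?_)
  have hkn := mem_range.mp hk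
  rw [coeff_rescale_two_expGeneratingSeries, coeff_frobeniusEulerFactor (by omega),
    coeff_sub_map_evalZero_expGeneratingSeries_mul_self H hkn.le,
    coeff_map_evalZero_expGeneratingSeries]
  simp only [div_eq_mul_inv, map_mul, map_add, map_neg, map_ofNat]
  ring
end

section
/- For every λ ∈ ℂ with λ ≠ 1, every r ∈ ℤ_{≥0} and every n ∈ ℤ_{≥0}, H_n(x|λ) = (1/(1−λ)^r)·Σ_{k=0}^{n} binom(n,k)·( Σ_{j=0}^{r} binom(r,j)·(−λ)^{r−j}·H_{n−k}(j|λ) )·H_k^{(r)}(x|λ), as an identity of polynomials in x, where H_{n−k}(j|λ) is the Frobenius–Euler polynomial H_{n−k}(x|λ) evaluated at x = j. -/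
/-!
Substituting `x = j` in the generating function of `H_n(x|λ)` gives `(1 - λ) e^{jt} / (e^t - λ)`,
so by the binomial theorem the sum `∑_j (r choose j) (-λ)^{r-j} H_•(j|λ)` has generating function
`(1 - λ) (e^t - λ)^r / (e^t - λ)`. Multiplying it by the generating function
`((1 - λ) / (e^t - λ))^r e^{xt}` of order `r` gives `(1 - λ)^r` times that of order `1`, and comparing
coefficients of `t^n` gives the identity. Generating functions are kept in the cleared-denominator
form `(e^t - λ)^r · F = (1 - λ)^r e^{xt}`; dividing by `e^t - λ` is replaced by cancelling it,
which is legitimate because power series over the domain `K[X]` form a domain.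
-/

open PowerSeries Finset

open scoped Nat Polynomial

namespace FrobeniusEuler

theorem exp_sub_C_ne_zero {A : Type*} [CommRing A] [Algebra ℚ A] {a : A} (ha : a ≠ 1) :
    exp A - PowerSeries.C a ≠ 0 := fun h =>
  ha (sub_eq_zero.mp (by simpa using congrArg constantCoeff h)).symm

variable {K : Type*} [Field K]

noncomputable def egf (f : ℕ → K[X]) : PowerSeries K[X] :=
  PowerSeries.mk fun n => Polynomial.C (n ! : K)⁻¹ * f n

theorem coeff_egf (f : ℕ → K[X]) (n : ℕ) :
    coeff n (egf f) = Polynomial.C (n ! : K)⁻¹ * f n :=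
  coeff_mk _ _

theorem egf_sum {ι : Type*} (s : Finset ι) (f : ι → ℕ → K[X]) :
    egf (fun n => ∑ i ∈ s, f i n) = ∑ i ∈ s, egf (f i) := by
  ext n : 1
  simp only [coeff_egf, map_sum, mul_sum]

theorem egf_C_mul (b : K[X]) (f : ℕ → K[X]) :
    egf (fun n => b * f n) = PowerSeries.C b * egf f := by
  ext n : 1
  rw [coeff_C_mul, coeff_egf, coeff_egf, mul_left_comm]

theorem map_compRingHom_C_egf (a : K) (f : ℕ → K[X]) :
    map (Polynomial.compRingHom (Polynomial.C a)) (egf f) =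
      egf fun n => Polynomial.C ((f n).eval a) := by
  ext n : 1
  simp [coeff_egf, coeff_map]

variable [CharZero K]

theorem egf_injective : Function.Injective (egf (K := K)) := by
  intro f g hfg
  funext n
  have hn : Polynomial.C (n ! : K)⁻¹ ≠ 0 := by simp [Nat.factorial_ne_zero]
  simpa only [coeff_egf, mul_right_inj' hn] using congrArg (coeff n) hfg

theorem egf_mul (f g : ℕ → K[X]) :
    egf f * egf g =
      egf fun n => ∑ k ∈ range (n + 1), Polynomial.C (n.choose k : K) * f k * g (n - k) := by
  ext n : 1
  rw [coeff_mul, Nat.sum_antidiagonal_eq_sum_range_succ_mk, coeff_egf, mul_sum]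
  refine sum_congr rfl fun k hk => ?_
  have hfact : (k ! : K)⁻¹ * ((n - k)! : K)⁻¹ = (n ! : K)⁻¹ * (n.choose k : K) := by
    have := Nat.factorial_ne_zero n
    rw [Nat.cast_choose K (mem_range_succ_iff.mp hk)]
    field_simp
  have hC := congrArg Polynomial.C hfact
  simp only [map_mul] at hC
  simp only [coeff_egf]
  linear_combination (f k * g (n - k)) * hC

theorem map_compRingHom_C_rescale_X_exp (a : K) :
    map (Polynomial.compRingHom (Polynomial.C a)) (rescale Polynomial.X (exp K[X])) =
      rescale (Polynomial.C a) (exp K[X]) := by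
  rw [← rescale_map, map_exp, Polynomial.coe_compRingHom_apply, Polynomial.X_comp]

section

variable {lam c : K} {F : ℕ → K[X]}

theorem mul_egf_eval (a : K)
    (hF : (exp K[X] - PowerSeries.C (Polynomial.C lam)) * egf F =
      PowerSeries.C (Polynomial.C c) * rescale Polynomial.X (exp K[X])) :
    (exp K[X] - PowerSeries.C (Polynomial.C lam)) * egf (fun n => Polynomial.C ((F n).eval a)) =
      PowerSeries.C (Polynomial.C c) * rescale (Polynomial.C a) (exp K[X]) := by
  simpa [map_compRingHom_C_egf, map_compRingHom_C_rescale_X_exp] using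
    congrArg (map (Polynomial.compRingHom (Polynomial.C a))) hF

theorem mul_egf_binomial_sum_eval (r : ℕ)
    (hF : (exp K[X] - PowerSeries.C (Polynomial.C lam)) * egf F =
      PowerSeries.C (Polynomial.C c) * rescale Polynomial.X (exp K[X])) :
    (exp K[X] - PowerSeries.C (Polynomial.C lam)) *
        egf (fun n => Polynomial.C
          (∑ j ∈ range (r + 1), (r.choose j : K) * (-lam) ^ (r - j) * (F n).eval (j : K))) =
      PowerSeries.C (Polynomial.C c) * (exp K[X] - PowerSeries.C (Polynomial.C lam)) ^ r := by
  simp only [map_sum, map_mul, egf_sum, egf_C_mul, mul_sum]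
  rw [sub_eq_add_neg, add_pow, mul_sum]
  refine sum_congr rfl fun j _ => ?_
  have hj := mul_egf_eval (j : K) hF
  rw [map_natCast, ← exp_pow_eq_rescale_exp] at hj
  simp only [map_pow, map_neg, map_natCast] at hj ⊢
  linear_combination ((r.choose j : PowerSeries K[X]) *
    (-PowerSeries.C (Polynomial.C lam)) ^ (r - j)) * hj

theorem C_pow_mul_egf_eq_egf_mul_egf (hlam : lam ≠ 1) {G : ℕ → K[X]} (r : ℕ)
    (hF : (exp K[X] - PowerSeries.C (Polynomial.C lam)) * egf F =
      PowerSeries.C (Polynomial.C (1 - lam)) * rescale Polynomial.X (exp K[X]))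
    (hG : (exp K[X] - PowerSeries.C (Polynomial.C lam)) ^ r * egf G =
      PowerSeries.C (Polynomial.C ((1 - lam) ^ r)) * rescale Polynomial.X (exp K[X])) :
    PowerSeries.C (Polynomial.C ((1 - lam) ^ r)) * egf F =
      egf G * egf (fun n => Polynomial.C
        (∑ j ∈ range (r + 1), (r.choose j : K) * (-lam) ^ (r - j) * (F n).eval (j : K))) := by
  have hsum := mul_egf_binomial_sum_eval r hF
  set A := exp K[X] - PowerSeries.C (Polynomial.C lam)
  set c := PowerSeries.C (Polynomial.C (1 - lam))
  have hA : A ≠ 0 := exp_sub_C_ne_zero (by rwa [ne_eq, ← Polynomial.C_1, Polynomial.C_inj])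
  apply mul_left_cancel₀ (pow_ne_zero (r + 1) hA)
  simp only [map_pow] at hG ⊢
  linear_combination (A ^ r * c ^ r) * hF - (A ^ r * egf G) * hsum - (c * A ^ r) * hG

end

end FrobeniusEuler

theorem frobenius_euler_in_terms_of_higher_order
    (lam : ℂ) (hlam : lam ≠ 1) (H : ℕ → ℕ → Polynomial ℂ)
    (hH : ∀ r : ℕ,
      (PowerSeries.exp (Polynomial ℂ) - PowerSeries.C (Polynomial.C lam)) ^ r *
          PowerSeries.mk (fun n => Polynomial.C ((n.factorial : ℂ))⁻¹ * H r n) =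
        PowerSeries.C (Polynomial.C ((1 - lam) ^ r)) *
          PowerSeries.rescale Polynomial.X (PowerSeries.exp (Polynomial ℂ)))
    (r : ℕ) (n : ℕ) :
    H 1 n = Polynomial.C (((1 - lam) ^ r)⁻¹) *
      ∑ k ∈ Finset.range (n + 1),
        Polynomial.C ((n.choose k : ℂ) *
          ∑ j ∈ Finset.range (r + 1),
            (r.choose j : ℂ) * (-lam) ^ (r - j) * (H 1 (n - k)).eval (j : ℂ)) * H r k := by
  have hc : ((1 - lam) ^ r : ℂ) ≠ 0 := pow_ne_zero r (sub_ne_zero.mpr hlam.symm)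
  have h1 := hH 1
  rw [pow_one, pow_one] at h1
  have key := FrobeniusEuler.C_pow_mul_egf_eq_egf_mul_egf hlam r h1 (hH r)
  rw [FrobeniusEuler.egf_mul, ← FrobeniusEuler.egf_C_mul] at key
  have hn := congrFun (FrobeniusEuler.egf_injective key) n
  calc H 1 n = Polynomial.C ((1 - lam) ^ r)⁻¹ * (Polynomial.C ((1 - lam) ^ r) * H 1 n) := by
        rw [← mul_assoc, ← map_mul, inv_mul_cancel₀ hc, map_one, one_mul]
    _ = _ := by
        rw [hn]
        congr 1
        refine sum_congr rfl fun k _ => ?_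
        rw [map_mul]
        ring
end
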